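/- arXiv:1703.06556 — 3 statements merged into one kernel-verified Lean document; each statement's English description precedes it below -/
import Mathlib

section
/- Let G be a finite simple connected graph with independence number α(G) = 2 that contains no induced cycle C₅ on five vertices. Then for every non-simplicial vertex v of G there exists a vertex u adjacent to v such that the pair {v, u} is a dominating set of G, i.e., every vertex of G is equal to or adjacent to v or u. -/
/-- A set of vertices is independent if its vertices are pairwise nonadjacent. -/
def SimpleGraph.IsIndepSet' {V : Type*} (G : SimpleGraph V) (s : Finset V) : Prop :=
  ∀ a ∈ s, ∀ b ∈ s, a ≠ b → ¬ G.Adj a b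

/-- The independence number of `G`: the largest cardinality of an independent set. -/
noncomputable def SimpleGraph.indepNum' {V : Type*} (G : SimpleGraph V) : ℕ :=
  sSup {n | ∃ s : Finset V, G.IsIndepSet' s ∧ s.card = n}

/-- `G` contains an induced (chordless) cycle on `n` vertices. -/
def SimpleGraph.HasInducedCycle {V : Type*} (G : SimpleGraph V) (n : ℕ) : Prop :=
  ∃ f : ZMod n → V, Function.Injective f ∧
    ∀ i j : ZMod n, G.Adj (f i) (f j) ↔ (j = i + 1 ∨ i = j + 1)

/-- A vertex is simplicial if its neighbourhood induces a complete subgraph. -/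
def SimpleGraph.IsSimplicial {V : Type*} (G : SimpleGraph V) (v : V) : Prop :=
  ∀ a ∈ G.neighborSet v, ∀ b ∈ G.neighborSet v, a ≠ b → G.Adj a b

/-- A graph is claw-free if no vertex has three pairwise nonadjacent neighbors. -/
def SimpleGraph.ClawFree {V : Type*} (G : SimpleGraph V) : Prop :=
  ¬ ∃ c x y z : V, x ≠ y ∧ x ≠ z ∧ y ≠ z ∧
    G.Adj c x ∧ G.Adj c y ∧ G.Adj c z ∧ ¬ G.Adj x y ∧ ¬ G.Adj x z ∧ ¬ G.Adj y z

/-!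
Let `a, b` be nonadjacent neighbours of `v`. If neither `va` nor `vb` were dominating, pick `x`
missed by `va` and `y` missed by `vb`. Since `α(G) = 2`, each of the triples `a x b`, `b y a`,
`v x y` spans an edge, which forces `xb`, `ya` and `xy`; but then `v a y x b` is an induced `C₅`.
-/

namespace SimpleGraph

variable {V : Type*} (G : SimpleGraph V)

theorem card_le_indepNum' [Fintype V] {s : Finset V} (hs : G.IsIndepSet' s) :
    s.card ≤ G.indepNum' :=
  le_csSup ⟨Fintype.card V, fun _ ⟨t, _, ht⟩ => ht ▸ t.card_le_univ⟩ ⟨s, hs, rfl⟩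

theorem adj_of_indepNum'_le_two [Fintype V] (h : G.indepNum' ≤ 2) {p q r : V}
    (hpq : p ≠ q) (hpr : p ≠ r) (hqr : q ≠ r) (npq : ¬ G.Adj p q) (npr : ¬ G.Adj p r) :
    G.Adj q r := by
  classical
  by_contra nqr
  have hind : G.IsIndepSet' {p, q, r} := by
    intro a ha b hb hab
    simp only [Finset.mem_insert, Finset.mem_singleton] at ha hb
    rcases ha with rfl | rfl | rfl <;> rcases hb with rfl | rfl | rfl <;>
      simp_all [G.adj_comm]
  have hcard : ({p, q, r} : Finset V).card = 3 :=
    Finset.card_eq_three.2 ⟨p, q, r, hpq, hpr, hqr, rfl⟩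
  have := G.card_le_indepNum' hind
  omega

theorem hasInducedCycle_five_of_adj {c : Fin 5 → V} (hadj : ∀ i, G.Adj (c i) (c (i + 1)))
    (hnadj : ∀ i, ¬ G.Adj (c i) (c (i + 2))) : G.HasInducedCycle 5 := by
  let f : ZMod 5 → V := c
  replace hadj : ∀ i, G.Adj (f i) (f (i + 1)) := hadj
  replace hnadj : ∀ i, ¬ G.Adj (f i) (f (i + 2)) := hnadj
  have hiff : ∀ i j : ZMod 5, G.Adj (f i) (f j) ↔ (j = i + 1 ∨ i = j + 1) := by
    intro i j
    obtain ⟨k, rfl⟩ : ∃ k, j = i + k := ⟨j - i, by ring⟩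
    have h3 := hnadj (i + 3)
    have h4 := hadj (i + 4)
    rw [add_assoc, show (3 + 2 : ZMod 5) = 0 from rfl, add_zero, G.adj_comm] at h3
    rw [add_assoc, show (4 + 1 : ZMod 5) = 0 from rfl, add_zero, G.adj_comm] at h4
    rw [(by decide : ∀ i k : ZMod 5, (i + k = i + 1 ∨ i = i + k + 1) ↔ (k = 1 ∨ k = 4)) i k]
    rcases (by decide : ∀ k : ZMod 5, k = 0 ∨ k = 1 ∨ k = 2 ∨ k = 3 ∨ k = 4) k
      with rfl | rfl | rfl | rfl | rfl
    · simp +decide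
    · simpa +decide using hadj i
    · simpa +decide using hnadj i
    · simpa +decide using h3
    · simpa +decide using h4
  refine ⟨f, fun i j hij => ?_, hiff⟩
  -- `f i = f j` forces `j = i + 2` and `j = i - 2`, but `2 ≠ -2` in `ZMod 5`.
  have h₁ := (hiff j (i + 1)).1 (hij ▸ (hiff i (i + 1)).2 (Or.inl rfl))
  have h₂ := (hiff j (i - 1)).1 (hij ▸ (hiff i (i - 1)).2 (Or.inr (sub_add_cancel i 1).symm))
  clear hij
  revert i j
  decide

end SimpleGraph

open SimpleGraph in
theorem stmt_0_general {V : Type*} [Fintype V] (G : SimpleGraph V)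
    (hα : G.indepNum' = 2) (hC5 : ¬ G.HasInducedCycle 5)
    (v : V) (hv : ¬ G.IsSimplicial v) :
    ∃ u : V, G.Adj v u ∧ ∀ w : V, w = v ∨ w = u ∨ G.Adj w v ∨ G.Adj w u := by
  simp only [IsSimplicial, mem_neighborSet, not_forall] at hv
  obtain ⟨a, hva, b, hvb, hab, hnab⟩ := hv
  by_contra! hdom
  obtain ⟨x, hxv, hxa, hxv', hxa'⟩ := hdom a hva
  obtain ⟨y, hyv, hyb, hyv', hyb'⟩ := hdom b hvb
  have hxb : G.Adj x b := G.adj_of_indepNum'_le_two hα.le (Ne.symm hxa) hab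
    (by rintro rfl; exact hxv' hvb.symm) (mt Adj.symm hxa') hnab
  have hya : G.Adj y a := G.adj_of_indepNum'_le_two hα.le (Ne.symm hyb) (Ne.symm hab)
    (by rintro rfl; exact hyv' hva.symm) (mt Adj.symm hyb') (mt Adj.symm hnab)
  have hxy : G.Adj x y := G.adj_of_indepNum'_le_two hα.le (Ne.symm hxv) (Ne.symm hyv)
    (by rintro rfl; exact hyb' hxb) (mt Adj.symm hxv') (mt Adj.symm hyv')
  refine hC5 (G.hasInducedCycle_five_of_adj (c := ![v, a, y, x, b]) ?_ ?_) <;> intro i <;>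
    fin_cases i
  exacts [hva, hya.symm, hxy.symm, hxb, hvb.symm, mt Adj.symm hyv', mt Adj.symm hxa', hyb',
    hxv', mt Adj.symm hnab]

/-- **Theorem 1.** If `G` is a finite simple connected graph with independence number 2 and
no induced `C₅`, then every non-simplicial vertex `v` lies on a dominating edge `vu`. -/
theorem stmt_0 {V : Type*} [Fintype V] (G : SimpleGraph V)
    (hconn : G.Connected) (hα : G.indepNum' = 2) (hC5 : ¬ G.HasInducedCycle 5)
    (v : V) (hv : ¬ G.IsSimplicial v) :
    ∃ u : V, G.Adj v u ∧ ∀ w : V, w = v ∨ w = u ∨ G.Adj w v ∨ G.Adj w u :=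
  stmt_0_general G hα hC5 v hv
end

section
/- Let G be a finite simple graph on n vertices with independence number α(G) = 2 that contains no induced cycle C₅ on five vertices. Then there exist pairwise disjoint nonempty vertex subsets B₁, …, B_k with k ≥ n/2 such that each B_i induces a connected subgraph of G and for every pair i ≠ j there is an edge of G joining a vertex of B_i to a vertex of B_j. -/
/-!
Induct on a vertex set `s`. If some edge `ab` of `s` dominates `s`, then `{a, b}` is a branch set
touching every branch set of a model for `s \ {a, b}`: one branch set for two vertices. Otherwise
pick `r ∈ s`. Its non-neighbours form a clique since `α(G) ≤ 2`, and its closed neighbourhood is a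
clique since two nonadjacent neighbours `u`, `w`, together with vertices witnessing that `ru` and
`rw` are not dominating, would span an induced `C₅`. One of these two cliques has at least `|s|/2`
vertices, and its singletons are branch sets.
-/

namespace SimpleGraph

open Finset

variable {V : Type*} {G : SimpleGraph V}

theorem indepNum'_eq_indepNum (G : SimpleGraph V) : G.indepNum' = G.indepNum := by
  simp only [indepNum', indepNum, isNIndepSet_iff, IsIndepSet', isIndepSet_iff, Set.Pairwise,
    Finset.mem_coe]

theorem indepSetFree_of_indepNum_lt [Finite V] {n : ℕ} (h : G.indepNum < n) :
    G.IndepSetFree n := fun t ht => by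
  have := ht.isIndepSet.card_le_indepNum
  rw [ht.card_eq] at this
  omega

theorem IndepSetFree.adj_of_not_adj_of_not_adj (h : G.IndepSetFree 3) {x y z : V}
    (hxy : x ≠ y) (hxz : x ≠ z) (hyz : y ≠ z) (nxy : ¬G.Adj x y) (nxz : ¬G.Adj x z) :
    G.Adj y z := by
  classical
  by_contra nyz
  apply h {x, y, z}
  rw [← isNClique_compl, is3Clique_triple_iff]
  simp [compl_adj, *]

theorem hasInducedCycle_five {v₀ v₁ v₂ v₃ v₄ : V}
    (h₀₁ : G.Adj v₀ v₁) (h₁₂ : G.Adj v₁ v₂) (h₂₃ : G.Adj v₂ v₃) (h₃₄ : G.Adj v₃ v₄)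
    (h₄₀ : G.Adj v₄ v₀) (n₀₂ : ¬G.Adj v₀ v₂) (n₀₃ : ¬G.Adj v₀ v₃) (n₁₃ : ¬G.Adj v₁ v₃)
    (n₁₄ : ¬G.Adj v₁ v₄) (n₂₄ : ¬G.Adj v₂ v₄) :
    G.HasInducedCycle 5 := by
  have cases : ∀ i : ZMod 5, i = 0 ∨ i = 1 ∨ i = 2 ∨ i = 3 ∨ i = 4 := by decide
  refine ⟨![v₀, v₁, v₂, v₃, v₄], fun i j hij => ?_, fun i j => ?_⟩ <;>
  · rcases cases i with rfl | rfl | rfl | rfl | rfl <;>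
      rcases cases j with rfl | rfl | rfl | rfl | rfl <;>
      simp_all [G.adj_comm] <;> decide

variable (G) in
def IsDominatingEdgeOn (s : Set V) (a b : V) : Prop :=
  G.Adj a b ∧ ∀ x ∈ s, x ≠ a → x ≠ b → G.Adj a x ∨ G.Adj b x

theorem IndepSetFree.isClique_compl_insert_neighborSet (h3 : G.IndepSetFree 3) (r : V) :
    G.IsClique (insert r (G.neighborSet r))ᶜ := by
  intro u hu w hw huw
  simp only [Set.mem_compl_iff, Set.mem_insert_iff, mem_neighborSet, not_or] at hu hw
  exact h3.adj_of_not_adj_of_not_adj (Ne.symm hu.1) (Ne.symm hw.1) huw hu.2 hw.2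

theorem isClique_inter_insert_neighborSet (h3 : G.IndepSetFree 3) (hC5 : ¬G.HasInducedCycle 5)
    {s : Set V} (hs : ∀ a ∈ s, ∀ b ∈ s, ¬G.IsDominatingEdgeOn s a b) {r : V} (hr : r ∈ s) :
    G.IsClique (s ∩ insert r (G.neighborSet r)) := by
  have hwitness : ∀ u ∈ s, G.Adj r u →
      ∃ x ∈ s, x ≠ r ∧ x ≠ u ∧ ¬G.Adj r x ∧ ¬G.Adj u x := fun u hu hru => by
    simpa [IsDominatingEdgeOn, hru] using hs r hr u hu
  rintro u ⟨hus, rfl | hru⟩ w ⟨hws, rfl | hrw⟩ huw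
  · exact absurd rfl huw
  · exact hrw
  · exact hru.symm
  by_contra nuw
  obtain ⟨x, -, hxr, hxu, nrx, nux⟩ := hwitness u hus hru
  obtain ⟨y, -, hyr, hyw, nry, nwy⟩ := hwitness w hws hrw
  have hxw : G.Adj x w := h3.adj_of_not_adj_of_not_adj hxu.symm huw
    (by rintro rfl; exact nrx hrw) nux nuw
  have huy : G.Adj u y := h3.adj_of_not_adj_of_not_adj huw.symm hyw.symm
    (by rintro rfl; exact nry hru) (fun h => nuw h.symm) nwy
  have hxy : G.Adj x y := h3.adj_of_not_adj_of_not_adj hxr.symm hyr.symm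
    (by rintro rfl; exact nwy hxw.symm) nrx nry
  -- `r u y x w` is an induced `C₅`
  exact hC5 (hasInducedCycle_five hru huy hxy.symm hxw hrw.symm nry nrx nux nuw
    fun h => nwy h.symm)

theorem exists_isClique_two_mul_card_ge (h3 : G.IndepSetFree 3) (hC5 : ¬G.HasInducedCycle 5)
    (s : Finset V) (hs : ∀ a ∈ s, ∀ b ∈ s, ¬G.IsDominatingEdgeOn s a b) :
    ∃ t ⊆ s, G.IsClique (t : Set V) ∧ #s ≤ 2 * #t := by
  classical
  obtain rfl | ⟨r, hr⟩ := s.eq_empty_or_nonempty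
  · exact ⟨∅, subset_rfl, by simp, by simp⟩
  set N := {v ∈ s | v ∈ insert r (G.neighborSet r)}
  set M := {v ∈ s | v ∉ insert r (G.neighborSet r)}
  have hNM : #N + #M = #s := card_filter_add_card_filter_not _
  have hN : G.IsClique (N : Set V) := by
    rw [coe_filter]
    exact isClique_inter_insert_neighborSet h3 hC5 hs hr
  have hM : G.IsClique (M : Set V) :=
    (h3.isClique_compl_insert_neighborSet r).subset fun v hv => (mem_filter.1 hv).2
  rcases le_total #N #M with h | h
  · exact ⟨M, filter_subset _ _, hM, by omega⟩
  · exact ⟨N, filter_subset _ _, hN, by omega⟩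

variable (G) in
structure IsCliqueMinorModel {k : ℕ} (B : Fin k → Set V) : Prop where
  nonempty : ∀ i, (B i).Nonempty
  disjoint : ∀ i j, i ≠ j → Disjoint (B i) (B j)
  connected : ∀ i, (G.induce (B i)).Connected
  exists_adj : ∀ i j, i ≠ j → ∃ a ∈ B i, ∃ b ∈ B j, G.Adj a b

theorem IsClique.isCliqueMinorModel_singleton {t : Finset V} (ht : G.IsClique (t : Set V)) :
    G.IsCliqueMinorModel fun i : Fin t.card => {(t.equivFin.symm i : V)} where
  nonempty _ := Set.singleton_nonempty _
  disjoint _ _ hij := Set.disjoint_singleton.2 fun h =>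
    hij (t.equivFin.symm.injective (Subtype.ext h))
  connected _ := by simp
  exists_adj i j hij := ⟨_, rfl, _, rfl, ht (t.equivFin.symm i).2 (t.equivFin.symm j).2
    fun h => hij (t.equivFin.symm.injective (Subtype.ext h))⟩

theorem IsCliqueMinorModel.cons {k : ℕ} {B : Fin k → Set V} (hB : G.IsCliqueMinorModel B)
    {a b : V} (hab : G.Adj a b) (ha : ∀ i, a ∉ B i) (hb : ∀ i, b ∉ B i)
    (hdom : ∀ i, ∀ x ∈ B i, G.Adj a x ∨ G.Adj b x) :
    G.IsCliqueMinorModel (Fin.cons {a, b} B : Fin (k + 1) → Set V) := by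
  have hnew : ∀ i, ∃ x ∈ ({a, b} : Set V), ∃ y ∈ B i, G.Adj x y := fun i => by
    obtain ⟨y, hy⟩ := hB.nonempty i
    rcases hdom i y hy with h | h
    exacts [⟨a, by simp, y, hy, h⟩, ⟨b, by simp, y, hy, h⟩]
  refine ⟨Fin.cases (by simp) hB.nonempty, ?_, Fin.cases (induce_pair_connected_of_adj hab)
    hB.connected, ?_⟩
  · intro i j hij
    induction i using Fin.cases <;> induction j using Fin.cases
    · exact absurd rfl hij
    · simpa [Set.disjoint_left] using ⟨ha _, hb _⟩
    · simpa [Set.disjoint_right] using ⟨ha _, hb _⟩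
    · exact hB.disjoint _ _ (by simpa using hij)
  · intro i j hij
    induction i using Fin.cases <;> induction j using Fin.cases
    · exact absurd rfl hij
    · simpa using hnew _
    · obtain ⟨x, hx, y, hy, h⟩ := hnew ‹_›
      exact ⟨y, hy, x, hx, h.symm⟩
    · simpa using hB.exists_adj _ _ (by simpa using hij)

theorem exists_isCliqueMinorModel_two_mul_ge (h3 : G.IndepSetFree 3)
    (hC5 : ¬G.HasInducedCycle 5) (s : Finset V) :
    ∃ (k : ℕ) (B : Fin k → Set V), G.IsCliqueMinorModel B ∧ (∀ i, B i ⊆ s) ∧ #s ≤ 2 * k := by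
  classical
  induction s using Finset.strongInduction with | H s ih =>
  by_cases hdom : ∃ a ∈ s, ∃ b ∈ s, G.IsDominatingEdgeOn s a b
  · obtain ⟨a, ha, b, hb, hab, hdom⟩ := hdom
    have hsub : (s.erase a).erase b ⊂ s :=
      (erase_subset _ _).trans_ssubset (erase_ssubset ha)
    obtain ⟨k, B, hB, hBs, hk⟩ := ih _ hsub
    have hBs' : ∀ i, ∀ x ∈ B i, x ∈ s ∧ x ≠ a ∧ x ≠ b := fun i x hx => by
      simpa [and_assoc] using hBs i hx
    refine ⟨k + 1, Fin.cons {a, b} B,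
      hB.cons hab (fun i ha => (hBs' i a ha).2.1 rfl) (fun i hb => (hBs' i b hb).2.2 rfl)
        fun i x hx => hdom x (hBs' i x hx).1 (hBs' i x hx).2.1 (hBs' i x hx).2.2,
      Fin.cases (by simp [Set.insert_subset_iff, ha, hb])
        fun i => (hBs i).trans (coe_subset.2 hsub.subset), ?_⟩
    have hb' := card_erase_add_one (mem_erase.2 ⟨hab.ne', hb⟩)
    have ha' := card_erase_add_one ha
    omega
  · push Not at hdom
    obtain ⟨t, hts, ht, hcard⟩ := exists_isClique_two_mul_card_ge h3 hC5 s hdom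
    exact ⟨#t, _, ht.isCliqueMinorModel_singleton,
      fun i => by simpa using hts (t.equivFin.symm i).2, hcard⟩

end SimpleGraph

/-- **Corollary to Theorem 1.** If `G` is a finite simple graph on `n` vertices with
independence number 2 and no induced `C₅`, then there are at least `n/2` pairwise disjoint
nonempty connected vertex subsets, every two of which are joined by an edge. -/
theorem stmt_1 {V : Type*} [Fintype V] (G : SimpleGraph V)
    (hα : G.indepNum' = 2) (hC5 : ¬ G.HasInducedCycle 5) :
    ∃ (k : ℕ) (B : Fin k → Set V),
      (∀ i, (B i).Nonempty) ∧
      (∀ i j, i ≠ j → Disjoint (B i) (B j)) ∧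
      (∀ i, (G.induce (B i)).Connected) ∧
      (∀ i j, i ≠ j → ∃ a ∈ B i, ∃ b ∈ B j, G.Adj a b) ∧
      (Fintype.card V : ℝ) / 2 ≤ (k : ℝ) := by
  have h3 : G.IndepSetFree 3 :=
    SimpleGraph.indepSetFree_of_indepNum_lt
      (by rw [← G.indepNum'_eq_indepNum, hα]; norm_num)
  obtain ⟨k, B, hB, -, hk⟩ := G.exists_isCliqueMinorModel_two_mul_ge h3 hC5 Finset.univ
  refine ⟨k, B, hB.nonempty, hB.disjoint, hB.connected, hB.exists_adj, ?_⟩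
  rw [Finset.card_univ] at hk
  rw [div_le_iff₀ two_pos]
  exact_mod_cast (mul_comm k 2 ▸ hk)
end

section
/- Let G be a finite simple graph on n vertices with independence number α(G) = 3 that contains no induced cycle C₇ on seven vertices. Then there exist pairwise disjoint nonempty vertex subsets B₁, …, B_k with k ≥ n/4 such that each B_i induces a connected subgraph of G and for every pair i ≠ j there is an edge of G joining a vertex of B_i to a vertex of B_j. -/
namespace SimpleGraph

variable {V W : Type*} {G : SimpleGraph V} {H : SimpleGraph W}

lemma isIndepSet'_iff_isClique_compl {s : Finset V} :
    G.IsIndepSet' s ↔ Gᶜ.IsClique (s : Set V) := by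
  simp only [IsIndepSet', IsClique, Set.Pairwise, Finset.mem_coe, compl_adj]
  exact forall₂_congr fun a _ => forall₂_congr fun b _ => ⟨fun h hab => ⟨hab, h hab⟩,
    fun h hab => (h hab).2⟩

lemma isIndepSet'_singleton (a : V) : G.IsIndepSet' {a} := by
  simp [IsIndepSet']

lemma IsIndepSet'.union [DecidableEq V] {I J : Finset V} (hI : G.IsIndepSet' I)
    (hJ : G.IsIndepSet' J) (hIJ : ∀ a ∈ I, ∀ b ∈ J, ¬G.Adj a b) : G.IsIndepSet' (I ∪ J) := by
  intro a ha b hb hab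
  rcases Finset.mem_union.1 ha with ha | ha <;> rcases Finset.mem_union.1 hb with hb | hb
  · exact hI a ha b hb hab
  · exact hIJ a ha b hb
  · exact fun h => hIJ b hb a ha h.symm
  · exact hJ a ha b hb hab

lemma exists_isIndepSet'_card_max (G : SimpleGraph V) (s : Finset V) :
    ∃ I ⊆ s, G.IsIndepSet' I ∧ ∀ J ⊆ s, G.IsIndepSet' J → J.card ≤ I.card := by
  classical
  obtain ⟨I, hI, hmax⟩ := (s.powerset.filter G.IsIndepSet').exists_max_image Finset.card
    ⟨∅, by simp [IsIndepSet']⟩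
  simp only [Finset.mem_filter, Finset.mem_powerset, and_imp] at hI hmax
  exact ⟨I, hI.1, hI.2, hmax⟩

lemma le_of_isNClique_compl {t n : ℕ} {s : Finset V}
    (hα : ∀ I : Finset V, G.IsIndepSet' I → I.card ≤ t) (h : Gᶜ.IsNClique n s) : n ≤ t :=
  h.card_eq ▸ hα s (isIndepSet'_iff_isClique_compl.2 h.isClique)

lemma ne_of_compl_adj_of_adj {u v w : V} (h₁ : Gᶜ.Adj u w) (h₂ : G.Adj v w) : u ≠ v :=
  fun h => ((G.compl_adj u w).1 h₁).2 (h ▸ h₂)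

lemma adj_of_indep_le_three (hα : ∀ I : Finset V, G.IsIndepSet' I → I.card ≤ 3) {a b c d : V}
    (hab : Gᶜ.Adj a b) (hac : Gᶜ.Adj a c) (hbc : Gᶜ.Adj b c) (hda : Gᶜ.Adj d a)
    (hdb : Gᶜ.Adj d b) (hdc : d ≠ c) : G.Adj d c := by
  classical
  by_contra h
  have h4 : Gᶜ.IsNClique 4 {d, a, b, c} :=
    (is3Clique_triple_iff.2 ⟨hab, hac, hbc⟩).insert
      (by simpa using ⟨hda, hdb, (G.compl_adj d c).2 ⟨hdc, h⟩⟩)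
  exact absurd (le_of_isNClique_compl hα h4) (by norm_num)

lemma isIndepSet'_map_subtype {s : Set V} {I : Finset s} (h : (G.induce s).IsIndepSet' I) :
    G.IsIndepSet' (I.map (Function.Embedding.subtype _)) := by
  simp only [IsIndepSet', Finset.mem_map, Function.Embedding.coe_subtype, forall_exists_index,
    and_imp, forall_apply_eq_imp_iff₂]
  exact fun a ha b hb hab => h a ha b hb (ne_of_apply_ne _ hab)

lemma HasInducedCycle.of_induce {s : Set V} {n : ℕ} (h : (G.induce s).HasInducedCycle n) :
    G.HasInducedCycle n := by
  obtain ⟨f, hf, hadj⟩ := h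
  exact ⟨Subtype.val ∘ f, Subtype.val_injective.comp hf, hadj⟩

lemma hasInducedCycle_seven {a₀ a₁ a₂ a₃ a₄ a₅ a₆ : V}
    (h₀₁ : G.Adj a₀ a₁) (h₁₂ : G.Adj a₁ a₂) (h₂₃ : G.Adj a₂ a₃) (h₃₄ : G.Adj a₃ a₄)
    (h₄₅ : G.Adj a₄ a₅) (h₅₆ : G.Adj a₅ a₆) (h₆₀ : G.Adj a₆ a₀)
    (n₀₂ : Gᶜ.Adj a₀ a₂) (n₀₃ : Gᶜ.Adj a₀ a₃) (n₀₄ : Gᶜ.Adj a₀ a₄) (n₀₅ : Gᶜ.Adj a₀ a₅)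
    (n₁₃ : Gᶜ.Adj a₁ a₃) (n₁₄ : Gᶜ.Adj a₁ a₄) (n₁₅ : Gᶜ.Adj a₁ a₅) (n₁₆ : Gᶜ.Adj a₁ a₆)
    (n₂₄ : Gᶜ.Adj a₂ a₄) (n₂₅ : Gᶜ.Adj a₂ a₅) (n₂₆ : Gᶜ.Adj a₂ a₆)
    (n₃₅ : Gᶜ.Adj a₃ a₅) (n₃₆ : Gᶜ.Adj a₃ a₆) (n₄₆ : Gᶜ.Adj a₄ a₆) :
    G.HasInducedCycle 7 := by
  set f : ZMod 7 → V := ![a₀, a₁, a₂, a₃, a₄, a₅, a₆]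
  have hcases : ∀ i : ZMod 7, i = 0 ∨ i = 1 ∨ i = 2 ∨ i = 3 ∨ i = 4 ∨ i = 5 ∨ i = 6 := by
    decide
  have hadj : ∀ i j, G.Adj (f i) (f j) ↔ (j = i + 1 ∨ i = j + 1) := by
    simp only [compl_adj] at *
    intro i j
    obtain rfl | rfl | rfl | rfl | rfl | rfl | rfl := hcases i <;>
    obtain rfl | rfl | rfl | rfl | rfl | rfl | rfl := hcases j <;>
    simp [f, *, h₆₀.symm, G.adj_comm] <;> decide
  -- two distinct vertices of a 7-cycle have different neighbourhoods
  have hsep : ∀ i j : ZMod 7, i ≠ j →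
      ∃ k, ¬((k = i + 1 ∨ i = k + 1) ↔ (k = j + 1 ∨ j = k + 1)) := by
    decide
  refine ⟨f, fun i j hf => ?_, hadj⟩
  by_contra hij
  obtain ⟨k, hk⟩ := hsep i j hij
  exact hk (by rw [← hadj, ← hadj, hf])

def IsDominating (H : SimpleGraph W) (D : Set W) : Prop :=
  ∀ v ∉ D, ∃ d ∈ D, H.Adj v d

lemma not_isDominating_iff {D : Set W} : ¬H.IsDominating D ↔ ∃ u, ∀ d ∈ D, Hᶜ.Adj u d := by
  simp only [IsDominating, compl_adj, not_forall, not_exists, not_and, exists_prop]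
  constructor
  · rintro ⟨u, hu, hadj⟩
    exact ⟨u, fun d hd => ⟨fun h => hu (h ▸ hd), hadj d hd⟩⟩
  · rintro ⟨u, hu⟩
    exact ⟨u, fun h => (hu u h).1 rfl, fun d hd => (hu d hd).2⟩

lemma exists_compl_adj_of_not_isDominating {a b c d : W} (h : ¬H.IsDominating {a, b, c, d}) :
    ∃ u, Hᶜ.Adj u a ∧ Hᶜ.Adj u b ∧ Hᶜ.Adj u c ∧ Hᶜ.Adj u d := by
  simpa using not_isDominating_iff.1 h

lemma Connected.exists_adj_of_mem_of_notMem (hH : H.Connected) {X : Set W} {a b : W}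
    (ha : a ∈ X) (hb : b ∉ X) : ∃ x ∈ X, ∃ m ∉ X, H.Adj x m := by
  obtain ⟨d, -, hd₁, hd₂⟩ := (hH.preconnected a b).some.exists_boundary_dart X ha hb
  exact ⟨_, hd₁, _, hd₂, d.adj⟩

lemma Connected.exists_induced_path3 (hH : H.Connected) {a b : W} (hab : Hᶜ.Adj a b) :
    ∃ p q r, H.Adj p q ∧ H.Adj q r ∧ Hᶜ.Adj p r := by
  obtain ⟨hne, hnadj⟩ := (H.compl_adj a b).1 hab
  obtain ⟨q, hq, r, hr, hqr⟩ := hH.exists_adj_of_mem_of_notMem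
    (X := {v | v = a ∨ H.Adj a v}) (b := b) (Or.inl rfl) (by simp [hne.symm, hnadj])
  simp only [Set.mem_ofPred_eq, not_or] at hq hr
  rcases hq with rfl | haq
  · exact absurd hqr hr.2
  · exact ⟨a, q, r, haq, hqr, (H.compl_adj a r).2 ⟨Ne.symm hr.1, hr.2⟩⟩

lemma isDominating_triple_of_indep_le_two (hα : ∀ I : Finset W, H.IsIndepSet' I → I.card ≤ 2)
    {p r : W} (hpr : Hᶜ.Adj p r) (q : W) : H.IsDominating {p, q, r} := by
  classical
  by_contra h
  obtain ⟨u, hu⟩ := not_isDominating_iff.1 h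
  simp only [Set.mem_insert_iff, Set.mem_singleton_iff, forall_eq_or_imp, forall_eq] at hu
  have h3 : Hᶜ.IsNClique 3 {u, p, r} := is3Clique_triple_iff.2 ⟨hu.1, hu.2.2, hpr⟩
  exact absurd (le_of_isNClique_compl hα h3) (by norm_num)

section SevenCycle

variable {p q r x m : W}

lemma hasInducedCycle_seven_of_adj_end (hα : ∀ I : Finset W, H.IsIndepSet' I → I.card ≤ 3)
    (hnd : ∀ a b c d, H.Adj a b → H.Adj b c → H.Adj c d → ¬H.IsDominating {a, b, c, d})
    (hpq : H.Adj p q) (hqr : H.Adj q r) (hpr : Hᶜ.Adj p r)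
    (hxp : Hᶜ.Adj x p) (hxq : Hᶜ.Adj x q) (hxr : Hᶜ.Adj x r)
    (hxm : H.Adj x m) (hmp : H.Adj m p) (hmq : Hᶜ.Adj m q) (hmr : Hᶜ.Adj m r) :
    H.HasInducedCycle 7 := by
  -- the induced cycle is `x m p q r w y`
  obtain ⟨w, hwx, hwm, hwp, hwq⟩ := exists_compl_adj_of_not_isDominating (hnd x m p q hxm hmp hpq)
  obtain ⟨y, hym, hyp, hyq, hyr⟩ := exists_compl_adj_of_not_isDominating (hnd m p q r hmp hpq hqr)
  have hwr : H.Adj w r :=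
    adj_of_indep_le_three hα hxp hxr hpr hwx hwp (ne_of_compl_adj_of_adj hwq hqr.symm)
  have hyx : H.Adj y x :=
    adj_of_indep_le_three hα hpr hxp.symm hxr.symm hyp hyr (ne_of_compl_adj_of_adj hym hxm)
  have hwy : H.Adj w y :=
    adj_of_indep_le_three hα hmq hym.symm hyq.symm hwm hwq (ne_of_compl_adj_of_adj hyr hwr).symm
  exact hasInducedCycle_seven hxm hmp hpq hqr hwr.symm hwy hyx hxp hxq hxr hwx.symm hmq hmr
    hwm.symm hym.symm hpr hwp.symm hyp.symm hwq.symm hyq.symm hyr.symm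

lemma hasInducedCycle_seven_of_adj_mid (hα : ∀ I : Finset W, H.IsIndepSet' I → I.card ≤ 3)
    (hnd : ∀ a b c d, H.Adj a b → H.Adj b c → H.Adj c d → ¬H.IsDominating {a, b, c, d})
    (hpq : H.Adj p q) (hqr : H.Adj q r) (hpr : Hᶜ.Adj p r)
    (hxp : Hᶜ.Adj x p) (hxq : Hᶜ.Adj x q) (hxr : Hᶜ.Adj x r)
    (hxm : H.Adj x m) (hmq : H.Adj m q) (hmr : Hᶜ.Adj m r) :
    H.HasInducedCycle 7 := by
  -- `q r u` is an induced path on whose end `q` the vertex `m` hangs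
  obtain ⟨u, hux, hum, huq, hup⟩ :=
    exists_compl_adj_of_not_isDominating (hnd x m q p hxm hmq hpq.symm)
  have hur : H.Adj u r :=
    adj_of_indep_le_three hα hxp hxr hpr hux hup (ne_of_compl_adj_of_adj huq hqr.symm)
  exact hasInducedCycle_seven_of_adj_end hα hnd hqr hur.symm huq.symm hxq hxr hux.symm hxm hmq
    hmr hum.symm

lemma hasInducedCycle_seven_of_adj_ends (hα : ∀ I : Finset W, H.IsIndepSet' I → I.card ≤ 3)
    (hnd : ∀ a b c d, H.Adj a b → H.Adj b c → H.Adj c d → ¬H.IsDominating {a, b, c, d})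
    (hpq : H.Adj p q) (hqr : H.Adj q r) (hpr : Hᶜ.Adj p r)
    (hxp : Hᶜ.Adj x p) (hxq : Hᶜ.Adj x q) (hxr : Hᶜ.Adj x r)
    (hxm : H.Adj x m) (hmp : H.Adj m p) (hmr : H.Adj m r) :
    H.HasInducedCycle 7 := by
  -- `r u v` is an induced path on whose end `r` the vertex `m` hangs
  obtain ⟨u, hux, hum, hup, huq⟩ := exists_compl_adj_of_not_isDominating (hnd x m p q hxm hmp hpq)
  obtain ⟨v, hvx, hvm, hvr, hvq⟩ :=
    exists_compl_adj_of_not_isDominating (hnd x m r q hxm hmr hqr.symm)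
  have hur : H.Adj u r :=
    adj_of_indep_le_three hα hxp hxr hpr hux hup (ne_of_compl_adj_of_adj huq hqr.symm)
  have huv : H.Adj u v :=
    adj_of_indep_le_three hα hxq hvx.symm hvq.symm hux huq (ne_of_compl_adj_of_adj hvr hur).symm
  exact hasInducedCycle_seven_of_adj_end hα hnd hur.symm huv hvr.symm hxr hux.symm hvx.symm hxm
    hmr hum.symm hvm.symm

end SevenCycle

theorem Connected.exists_isDominating_walk_of_indep_le_three (hH : H.Connected)
    (hC7 : ¬H.HasInducedCycle 7) (hα : ∀ I : Finset W, H.IsIndepSet' I → I.card ≤ 3)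
    {u v : W} (huv : Hᶜ.Adj u v) :
    ∃ a b c d, H.Adj a b ∧ H.Adj b c ∧ H.Adj c d ∧ H.IsDominating {a, b, c, d} := by
  obtain ⟨p, q, r, hpq, hqr, hpr⟩ := hH.exists_induced_path3 huv
  by_cases hdom : H.IsDominating {p, q, r}
  · refine ⟨p, q, r, q, hpq, hqr, hqr.symm, ?_⟩
    convert hdom using 1
    ext
    simp only [Set.mem_insert_iff, Set.mem_singleton_iff]
    tauto
  by_contra! hnd
  obtain ⟨x₀, hx₀⟩ := not_isDominating_iff.1 hdom
  obtain ⟨x, ⟨hxp, hxq, hxr⟩, m, hm, hxm⟩ := hH.exists_adj_of_mem_of_notMem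
    (X := {v | Hᶜ.Adj v p ∧ Hᶜ.Adj v q ∧ Hᶜ.Adj v r}) (b := p) (by simpa using hx₀) (by simp)
  have compl_adj_m : ∀ {v}, Hᶜ.Adj x v → ¬H.Adj m v → Hᶜ.Adj m v := fun {v} hxv hmv =>
    (H.compl_adj m v).2 ⟨(ne_of_compl_adj_of_adj hxv.symm hxm.symm).symm, hmv⟩
  -- `m ∉ X` has a neighbour among `p, q, r`; split on which
  by_cases hmp : H.Adj m p <;> by_cases hmr : H.Adj m r
  · exact hC7 (hasInducedCycle_seven_of_adj_ends hα hnd hpq hqr hpr hxp hxq hxr hxm hmp hmr)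
  · by_cases hmq : H.Adj m q
    · exact hC7 (hasInducedCycle_seven_of_adj_mid hα hnd hpq hqr hpr hxp hxq hxr hxm hmq
        (compl_adj_m hxr hmr))
    · exact hC7 (hasInducedCycle_seven_of_adj_end hα hnd hpq hqr hpr hxp hxq hxr hxm hmp
        (compl_adj_m hxq hmq) (compl_adj_m hxr hmr))
  · by_cases hmq : H.Adj m q
    · exact hC7 (hasInducedCycle_seven_of_adj_mid hα hnd hqr.symm hpq.symm hpr.symm hxr hxq hxp
        hxm hmq (compl_adj_m hxp hmp))
    · exact hC7 (hasInducedCycle_seven_of_adj_end hα hnd hqr.symm hpq.symm hpr.symm hxr hxq hxp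
        hxm hmr (compl_adj_m hxq hmq) (compl_adj_m hxp hmp))
  · have hmq : H.Adj m q := by
      by_contra hmq
      exact hm ⟨compl_adj_m hxp hmp, compl_adj_m hxq hmq, compl_adj_m hxr hmr⟩
    exact hC7 (hasInducedCycle_seven_of_adj_mid hα hnd hpq hqr hpr hxp hxq hxr hxm hmq
      (compl_adj_m hxr hmr))

/-- The size of a connected dominating set that a connected graph with `α ≤ t` (and no induced
`C₇` if `t = 3`) is guaranteed to have. -/
def domBound : ℕ → ℕ
  | 0 | 1 => 1
  | 2 => 3
  | _ => 4

lemma domBound_pos (t : ℕ) : 0 < domBound t := by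
  rcases t with _ | _ | _ | _ <;> simp [domBound]

lemma domBound_add_le {a b t : ℕ} (ha : 1 ≤ a) (hb : 1 ≤ b) (hab : a + b ≤ t) (ht : t ≤ 3) :
    domBound a + domBound b ≤ domBound t := by
  obtain ⟨ha2, hb2⟩ : a ≤ 2 ∧ b ≤ 2 := by omega
  interval_cases a <;> interval_cases b <;> interval_cases t <;> simp_all [domBound]

theorem Connected.exists_isDominating_walk (hH : H.Connected) (hC7 : ¬H.HasInducedCycle 7)
    {t : ℕ} (ht : t ≤ 3) (hα : ∀ I : Finset W, H.IsIndepSet' I → I.card ≤ t) :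
    ∃ (u v : W) (P : H.Walk u v), P.length < domBound t ∧ H.IsDominating {w | w ∈ P.support} := by
  classical
  rcases em (∃ a b, Hᶜ.Adj a b) with ⟨a, b, hab⟩ | hcomplete
  swap
  · obtain ⟨a⟩ := hH.nonempty
    refine ⟨a, a, .nil, domBound_pos t, fun v hv => ⟨a, by simp, ?_⟩⟩
    by_contra h
    exact hcomplete ⟨v, a, (H.compl_adj v a).2 ⟨by simpa using hv, h⟩⟩
  have ht2 : 2 ≤ t := le_of_isNClique_compl hα ((isNClique_singleton.2 rfl).insert (by simpa))
  obtain rfl | rfl : t = 2 ∨ t = 3 := by omega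
  · obtain ⟨p, q, r, hpq, hqr, hpr⟩ := hH.exists_induced_path3 hab
    refine ⟨p, r, .cons hpq (.cons hqr .nil), by simp [domBound], ?_⟩
    convert isDominating_triple_of_indep_le_two hα hpr q using 1
    ext
    simp
  · obtain ⟨a, b, c, d, hab, hbc, hcd, hdom⟩ :=
      hH.exists_isDominating_walk_of_indep_le_three hC7 hα hab
    refine ⟨a, d, .cons hab (.cons hbc (.cons hcd .nil)), by simp [domBound], ?_⟩
    convert hdom using 1
    ext
    simp

lemma exists_dominating_of_connected_induce (hC7 : ¬G.HasInducedCycle 7) {s : Finset V}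
    (hs : (G.induce (s : Set V)).Connected) {t : ℕ} (ht : t ≤ 3)
    (hα : ∀ I ⊆ s, G.IsIndepSet' I → I.card ≤ t) :
    ∃ D ⊆ s, D.Nonempty ∧ (G.induce (D : Set V)).Connected ∧
      (∀ v ∈ s, v ∉ D → ∃ d ∈ D, G.Adj v d) ∧ D.card ≤ domBound t := by
  classical
  obtain ⟨u, v, P, hlen, hdom⟩ := hs.exists_isDominating_walk
    (fun h => hC7 h.of_induce) ht fun I hI => by
      simpa using hα _ (fun w hw => by obtain ⟨w', -, rfl⟩ := Finset.mem_map.1 hw; exact w'.prop)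
        (isIndepSet'_map_subtype hI)
  let Q := P.map (Embedding.induce (s : Set V)).toHom
  have hQ : ∀ w, w ∈ Q.support ↔ ∃ w' ∈ P.support, w'.val = w := by
    simp only [Q, Walk.support_map, List.mem_map]
    exact fun _ => Iff.rfl
  refine ⟨Q.support.toFinset, ?_, ⟨_, List.mem_toFinset.2 Q.start_mem_support⟩, ?_, ?_, ?_⟩
  · intro w hw
    obtain ⟨w', -, rfl⟩ := (hQ w).1 (List.mem_toFinset.1 hw)
    exact w'.prop
  · rw [List.coe_toFinset]
    exact Q.connected_induce_support
  · intro w hw hwD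
    obtain ⟨d, hd, hwd⟩ := hdom ⟨w, hw⟩ fun h => hwD (List.mem_toFinset.2 ((hQ w).2 ⟨_, h, rfl⟩))
    exact ⟨d, List.mem_toFinset.2 ((hQ d).2 ⟨d, hd, rfl⟩), hwd⟩
  · calc Q.support.toFinset.card ≤ Q.support.length := List.toFinset_card_le _
      _ = P.length + 1 := by rw [Walk.length_support, Walk.length_map]
      _ ≤ domBound t := hlen

structure IsCompleteMinorModel (G : SimpleGraph V) {k : ℕ} (B : Fin k → Set V) : Prop where
  nonempty : ∀ i, (B i).Nonempty
  disjoint : ∀ i j, i ≠ j → Disjoint (B i) (B j)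
  connected : ∀ i, (G.induce (B i)).Connected
  adj : ∀ i j, i ≠ j → ∃ a ∈ B i, ∃ b ∈ B j, G.Adj a b

lemma isCompleteMinorModel_zero (B : Fin 0 → Set V) : G.IsCompleteMinorModel B :=
  ⟨finZeroElim, fun i => i.elim0, finZeroElim, fun i => i.elim0⟩

lemma IsCompleteMinorModel.cons {k : ℕ} {B : Fin k → Set V} (hB : G.IsCompleteMinorModel B)
    {D : Set V} (hD : D.Nonempty) (hDconn : (G.induce D).Connected)
    (hdisj : ∀ i, Disjoint D (B i)) (hadj : ∀ i, ∃ a ∈ D, ∃ b ∈ B i, G.Adj a b) :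
    G.IsCompleteMinorModel (Fin.cons D B : Fin (k + 1) → Set V) where
  nonempty := Fin.cases hD hB.nonempty
  disjoint i j hij := by
    cases i using Fin.cases <;> cases j using Fin.cases
    · exact absurd rfl hij
    · exact hdisj _
    · exact (hdisj _).symm
    · exact hB.disjoint _ _ (ne_of_apply_ne Fin.succ hij)
  connected := Fin.cases hDconn hB.connected
  adj i j hij := by
    cases i using Fin.cases <;> cases j using Fin.cases
    · exact absurd rfl hij
    · exact hadj _
    · obtain ⟨a, ha, b, hb, hab⟩ := hadj _
      exact ⟨b, hb, a, ha, hab.symm⟩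
    · exact hB.adj _ _ (ne_of_apply_ne Fin.succ hij)

def HasCompleteMinorRatio (G : SimpleGraph V) (s : Finset V) (c : ℕ) : Prop :=
  ∃ (k : ℕ) (B : Fin k → Set V), G.IsCompleteMinorModel B ∧ (∀ i, B i ⊆ s) ∧ s.card ≤ k * c

lemma hasCompleteMinorRatio_empty (c : ℕ) : G.HasCompleteMinorRatio ∅ c :=
  ⟨0, finZeroElim, isCompleteMinorModel_zero _, finZeroElim, by simp⟩

lemma HasCompleteMinorRatio.of_sdiff [DecidableEq V] {s D : Finset V} {c : ℕ}
    (h : G.HasCompleteMinorRatio (s \ D) c) (hDs : D ⊆ s) (hD : D.Nonempty)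
    (hDconn : (G.induce (D : Set V)).Connected) (hdom : ∀ v ∈ s, v ∉ D → ∃ d ∈ D, G.Adj v d)
    (hcard : D.card ≤ c) : G.HasCompleteMinorRatio s c := by
  obtain ⟨k, B, hB, hBs, hk⟩ := h
  have hBD : ∀ i, ∀ v ∈ B i, v ∈ s ∧ v ∉ D := fun i v hv => by simpa using hBs i hv
  refine ⟨k + 1, Fin.cons (D : Set V) B, hB.cons (by simpa using hD) hDconn ?_ ?_, ?_, ?_⟩
  · exact fun i => Set.disjoint_left.2 fun v hvD hvB => (hBD i v hvB).2 hvD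
  · intro i
    obtain ⟨b, hb⟩ := hB.nonempty i
    obtain ⟨d, hd, hbd⟩ := hdom b (hBD i b hb).1 (hBD i b hb).2
    exact ⟨d, hd, b, hb, hbd.symm⟩
  · exact Fin.cases (by simpa using hDs) fun i => (hBs i).trans (by simp)
  · rw [← Finset.card_sdiff_add_card_eq_card hDs]
    nlinarith

lemma HasCompleteMinorRatio.union [DecidableEq V] {s₁ s₂ : Finset V} {c₁ c₂ c : ℕ}
    (h₁ : G.HasCompleteMinorRatio s₁ c₁) (h₂ : G.HasCompleteMinorRatio s₂ c₂)
    (hdisj : Disjoint s₁ s₂) (hc : c₁ + c₂ ≤ c) : G.HasCompleteMinorRatio (s₁ ∪ s₂) c := by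
  obtain ⟨k₁, B₁, hB₁, hB₁s, hk₁⟩ := h₁
  obtain ⟨k₂, B₂, hB₂, hB₂s, hk₂⟩ := h₂
  have hcard := Finset.card_union_of_disjoint hdisj
  rcases le_total k₁ k₂ with hk | hk
  · exact ⟨k₂, B₂, hB₂, fun i => (hB₂s i).trans (by simp), by nlinarith⟩
  · exact ⟨k₁, B₁, hB₁, fun i => (hB₁s i).trans (by simp), by nlinarith⟩

lemma exists_partition_of_not_connected_induce [DecidableEq V] {s : Finset V} (hs : s.Nonempty)
    (h : ¬(G.induce (s : Set V)).Connected) :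
    ∃ s₁ s₂ : Finset V, s₁.Nonempty ∧ s₂.Nonempty ∧ Disjoint s₁ s₂ ∧ s₁ ∪ s₂ = s ∧
      ∀ a ∈ s₁, ∀ b ∈ s₂, ¬G.Adj a b := by
  classical
  have : Nonempty (s : Set V) := hs.coe_sort
  obtain ⟨a, b, hab⟩ : ∃ a b, ¬(G.induce (s : Set V)).Reachable a b := by
    simpa [connected_iff, Preconnected] using h
  let P : V → Prop := fun v => ∃ hv : v ∈ s, (G.induce (s : Set V)).Reachable a ⟨v, hv⟩
  refine ⟨s.filter P, s.filter (¬P ·), ⟨a, by simp [P]⟩, ⟨b, by simpa [P] using hab⟩,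
    Finset.disjoint_filter_filter_not _ _ _, Finset.filter_union_filter_not_eq _ _, ?_⟩
  simp only [Finset.mem_filter, P]
  rintro u ⟨-, hu, hau⟩ v ⟨hv, hav⟩ huv
  exact hav ⟨hv, hau.trans (Adj.reachable (G := G.induce (s : Set V)) (u := ⟨u, hu⟩) huv)⟩

lemma exists_indep_bounds_of_union [DecidableEq V] {s₁ s₂ : Finset V} {t : ℕ}
    (hne₁ : s₁.Nonempty) (hne₂ : s₂.Nonempty) (hdisj : Disjoint s₁ s₂)
    (hno : ∀ a ∈ s₁, ∀ b ∈ s₂, ¬G.Adj a b) (hα : ∀ I ⊆ s₁ ∪ s₂, G.IsIndepSet' I → I.card ≤ t) :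
    ∃ t₁ t₂, 1 ≤ t₁ ∧ 1 ≤ t₂ ∧ t₁ + t₂ ≤ t ∧ (∀ I ⊆ s₁, G.IsIndepSet' I → I.card ≤ t₁) ∧
      ∀ I ⊆ s₂, G.IsIndepSet' I → I.card ≤ t₂ := by
  obtain ⟨I₁, hI₁s, hI₁, hmax₁⟩ := G.exists_isIndepSet'_card_max s₁
  obtain ⟨I₂, hI₂s, hI₂, hmax₂⟩ := G.exists_isIndepSet'_card_max s₂
  obtain ⟨a, ha⟩ := hne₁
  obtain ⟨b, hb⟩ := hne₂
  refine ⟨I₁.card, I₂.card, ?_, ?_, ?_, hmax₁, hmax₂⟩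
  · simpa using hmax₁ {a} (by simpa using ha) (isIndepSet'_singleton a)
  · simpa using hmax₂ {b} (by simpa using hb) (isIndepSet'_singleton b)
  · rw [← Finset.card_union_of_disjoint (hdisj.mono hI₁s hI₂s)]
    exact hα _ (Finset.union_subset_union hI₁s hI₂s)
      (hI₁.union hI₂ fun a ha b hb => hno a (hI₁s ha) b (hI₂s hb))

theorem hasCompleteMinorRatio_domBound (hC7 : ¬G.HasInducedCycle 7) (s : Finset V) {t : ℕ}
    (ht : t ≤ 3) (hα : ∀ I ⊆ s, G.IsIndepSet' I → I.card ≤ t) :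
    G.HasCompleteMinorRatio s (domBound t) := by
  classical
  induction s using Finset.strongInduction generalizing t with | H s ih =>
  rcases s.eq_empty_or_nonempty with rfl | hs
  · exact hasCompleteMinorRatio_empty _
  by_cases hconn : (G.induce (s : Set V)).Connected
  · obtain ⟨D, hDs, hD, hDconn, hdom, hcard⟩ :=
      exists_dominating_of_connected_induce hC7 hconn ht hα
    exact (ih _ (Finset.sdiff_ssubset hDs hD) ht fun I hI => hα I (hI.trans Finset.sdiff_subset))
      |>.of_sdiff hDs hD hDconn hdom hcard
  · obtain ⟨s₁, s₂, hne₁, hne₂, hdisj, rfl, hno⟩ :=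
      exists_partition_of_not_connected_induce hs hconn
    obtain ⟨t₁, t₂, ht₁, ht₂, ht₁₂, hα₁, hα₂⟩ :=
      exists_indep_bounds_of_union hne₁ hne₂ hdisj hno hα
    have h₁ : s₁ ⊂ s₁ ∪ s₂ := left_lt_sup.2 fun h =>
      hne₂.ne_empty <| Finset.disjoint_self_iff_empty _ |>.1 (hdisj.mono_left h)
    have h₂ : s₂ ⊂ s₁ ∪ s₂ := right_lt_sup.2 fun h =>
      hne₁.ne_empty <| Finset.disjoint_self_iff_empty _ |>.1 (hdisj.mono_right h)
    exact (ih s₁ h₁ (by omega) hα₁).union (ih s₂ h₂ (by omega) hα₂) hdisj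
      (domBound_add_le ht₁ ht₂ ht₁₂ ht)

end SimpleGraph

/-- **Corollary to Theorem 2.** If `G` is a finite simple graph on `n` vertices with
independence number 3 and no induced `C₇`, then there are at least `n/4` pairwise disjoint
nonempty connected vertex subsets, every two of which are joined by an edge. -/
theorem stmt_4 {V : Type*} [Fintype V] (G : SimpleGraph V)
    (hα : G.indepNum' = 3) (hC7 : ¬ G.HasInducedCycle 7) :
    ∃ (k : ℕ) (B : Fin k → Set V),
      (∀ i, (B i).Nonempty) ∧
      (∀ i j, i ≠ j → Disjoint (B i) (B j)) ∧
      (∀ i, (G.induce (B i)).Connected) ∧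
      (∀ i j, i ≠ j → ∃ a ∈ B i, ∃ b ∈ B j, G.Adj a b) ∧
      (Fintype.card V : ℝ) / 4 ≤ (k : ℝ) := by
  have hα₃ : ∀ I ⊆ (Finset.univ : Finset V), G.IsIndepSet' I → I.card ≤ 3 := fun I _ hI =>
    hα ▸ le_csSup ⟨Fintype.card V, by rintro n ⟨J, -, rfl⟩; exact J.card_le_univ⟩ ⟨I, hI, rfl⟩
  obtain ⟨k, B, hB, -, hcard⟩ :=
    SimpleGraph.hasCompleteMinorRatio_domBound hC7 Finset.univ le_rfl hα₃
  refine ⟨k, B, hB.nonempty, hB.disjoint, hB.connected, hB.adj, ?_⟩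
  have : (Fintype.card V : ℝ) ≤ k * 4 := by exact_mod_cast hcard
  linarith
end
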